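/- arXiv:2502.04220 — 5 statements merged into one kernel-verified Lean document; each statement's English description precedes it below -/
import Mathlib

section
/- For every σ > 0, every integer d ≥ 1, all constants λ_1 > ⋯ > λ_d > 0, and every γ_p ∈ (0, λ_d²σ⁻⁴), there exists γ_r⁰ ∈ (0, λ_d²σ⁻⁴ − γ_p) such that Δ(γ_p, γ_r) > 0 (i.e., φ(d) > φ(d+1)) for every γ_r ∈ (0, γ_r⁰). -/
open Finset

/-- Limiting spiked eigenvalue `τ_j = (λ_j + σ²)(1 + (γ_p+γ_r)σ²/λ_j)`. -/
noncomputable def tauSig (σ γp γr l : ℝ) : ℝ := (l + σ ^ 2) * (1 + (γp + γr) * σ ^ 2 / l)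

/-- Limiting top noise eigenvalue `τ_{d+1} = σ²(1 + √(γ_p+γ_r))²`. -/
noncomputable def tauNoise (σ γp γr : ℝ) : ℝ := σ ^ 2 * (1 + Real.sqrt (γp + γr)) ^ 2

/-- Limiting difference `Δ(γ_p, γ_r) = φ(d) − φ(d+1)` of the predictor-augmentation objective,
where `lam k` is `λ_{k+1}` for `k = 0, …, d-1`. -/
noncomputable def Delta (d : ℕ) (lam : ℕ → ℝ) (σ γp γr : ℝ) : ℝ :=
  -γr / (γr + γp) +
    (tauNoise σ γp γr) ^ 2 /
      ((1 + ((∑ i ∈ range d, tauSig σ γp γr (lam i)) + tauNoise σ γp γr)) *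
        (1 + ((∑ i ∈ range d, tauSig σ γp γr (lam i)) + tauNoise σ γp γr) + tauNoise σ γp γr))

lemma tauSig_continuous (σ γp l : ℝ) :
    Continuous (fun γr => tauSig σ γp γr l) := by
  unfold tauSig
  fun_prop

lemma tauNoise_continuousAt (σ γp : ℝ) (x : ℝ) :
    ContinuousAt (fun γr => tauNoise σ γp γr) x := by
  unfold tauNoise
  fun_prop

/-- Theorem 3 (i).  For every `σ > 0`, `d ≥ 1`, constants
`λ_1 > ⋯ > λ_d > 0` and every `γ_p ∈ (0, λ_d²σ⁻⁴)`, there exists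
`γ_r⁰ ∈ (0, λ_d²σ⁻⁴ − γ_p)` such that `Δ(γ_p, γ_r) > 0` for every `γ_r ∈ (0, γ_r⁰)`. -/
theorem predictor_augmentation_inconsistent_small_gamma_r
    (σ : ℝ) (hσ : 0 < σ) (d : ℕ) (hd : 1 ≤ d)
    (lam : ℕ → ℝ)
    (hlam_pos : ∀ k, k < d → 0 < lam k)
    (hlam_dec : ∀ k k', k < k' → k' < d → lam k' < lam k)
    (γp : ℝ) (hγp : γp ∈ Set.Ioo 0 ((lam (d - 1)) ^ 2 * (σ ^ 4)⁻¹)) :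
    ∃ γr0 ∈ Set.Ioo 0 ((lam (d - 1)) ^ 2 * (σ ^ 4)⁻¹ - γp),
      ∀ γr ∈ Set.Ioo (0 : ℝ) γr0, 0 < Delta d lam σ γp γr := by
  obtain ⟨hγp0, hγpU⟩ := hγp
  have hroom : 0 < (lam (d - 1)) ^ 2 * (σ ^ 4)⁻¹ - γp := by linarith
  -- positivity of Delta at γr = 0
  have hSnn : 0 ≤ ∑ i ∈ range d, tauSig σ γp 0 (lam i) := by
    refine Finset.sum_nonneg fun i hi => ?_
    have hl : 0 < lam i := hlam_pos i (mem_range.mp hi)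
    unfold tauSig
    positivity
  have hTpos : 0 < tauNoise σ γp 0 := by
    unfold tauNoise
    have : 0 < 1 + Real.sqrt (γp + 0) := by positivity
    positivity
  have hD1 : 0 < 1 + ((∑ i ∈ range d, tauSig σ γp 0 (lam i)) + tauNoise σ γp 0) := by
    linarith
  have hD2 : 0 < 1 + ((∑ i ∈ range d, tauSig σ γp 0 (lam i)) + tauNoise σ γp 0)
      + tauNoise σ γp 0 := by linarith
  have hf0 : 0 < Delta d lam σ γp 0 := by
    unfold Delta
    rw [neg_zero, zero_div]
    have := hTpos
    positivity
  -- continuity of Delta in γr at 0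
  have hcS : ContinuousAt (fun γr => ∑ i ∈ range d, tauSig σ γp γr (lam i)) 0 :=
    (continuous_finset_sum _ fun i _ => tauSig_continuous σ γp (lam i)).continuousAt
  have hcT : ContinuousAt (fun γr => tauNoise σ γp γr) 0 := tauNoise_continuousAt σ γp 0
  have hcf : ContinuousAt (fun γr => Delta d lam σ γp γr) 0 := by
    unfold Delta
    refine ContinuousAt.add ?_ ?_
    · refine ContinuousAt.div (by fun_prop) (by fun_prop) ?_
      simpa using hγp0.ne'
    · refine ContinuousAt.div (by fun_prop) ?_ ?_
      · exact ((continuousAt_const.add (hcS.add hcT)).mul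
          ((continuousAt_const.add (hcS.add hcT)).add hcT))
      · exact ne_of_gt (mul_pos hD1 hD2)
  have hev : ∀ᶠ x in nhds (0 : ℝ), 0 < Delta d lam σ γp x :=
    hcf.eventually (eventually_gt_nhds hf0)
  obtain ⟨ε, hε, hball⟩ := Metric.eventually_nhds_iff.mp hev
  refine ⟨min (ε / 2) (((lam (d - 1)) ^ 2 * (σ ^ 4)⁻¹ - γp) / 2), ⟨?_, ?_⟩, ?_⟩
  · exact lt_min (by linarith) (by linarith)
  · exact lt_of_le_of_lt (min_le_right _ _) (by linarith)
  · intro γr ⟨h0, h1⟩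
    have : γr < ε := lt_of_lt_of_le h1 ((min_le_left _ _).trans (by linarith))
    refine hball ?_
    rw [Real.dist_eq, sub_zero, abs_of_pos h0]
    exact this
end

section
/- For every σ > 0, every integer d ≥ 1, every γ_p > 0, and (when d ≥ 2) any fixed constants λ_1 > ⋯ > λ_{d−1} with λ_{d−1} > σ²√γ_p, there exists λ_d ∈ (σ²√γ_p, λ_{d−1}) (for d = 1, there exists λ_1 > σ²√γ_p) small enough such that Δ(γ_p, γ_r) > 0 (i.e., φ(d) > φ(d+1)) for every γ_r ∈ (0, λ_d²σ⁻⁴ − γ_p). -/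
open Finset

set_option maxHeartbeats 1000000

/-- Theorem 3 (ii).  For every `σ > 0`, `d ≥ 1`, `γ_p > 0` and (when `d ≥ 2`)
fixed constants `λ_1 > ⋯ > λ_{d−1}` with `λ_{d−1} > σ²√γ_p` (here `lam k` is `λ_{k+1}`), there
exists `λ_d ∈ (σ²√γ_p, λ_{d−1})` (for `d = 1`, just `λ_1 > σ²√γ_p`) small enough such that
`Δ(γ_p, γ_r) > 0` for every `γ_r ∈ (0, λ_d²σ⁻⁴ − γ_p)`. -/
theorem predictor_augmentation_inconsistent_weak_signal
    (σ : ℝ) (hσ : 0 < σ) (d : ℕ) (hd : 1 ≤ d) (γp : ℝ) (hγp : 0 < γp)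
    (lam : ℕ → ℝ)
    (hlam_pos : ∀ k, k < d - 1 → 0 < lam k)
    (hlam_dec : ∀ k k', k < k' → k' < d - 1 → lam k' < lam k)
    (hlam_last : 2 ≤ d → σ ^ 2 * Real.sqrt γp < lam (d - 2)) :
    ∃ lamd : ℝ, σ ^ 2 * Real.sqrt γp < lamd ∧ (2 ≤ d → lamd < lam (d - 2)) ∧
      ∀ γr ∈ Set.Ioo (0 : ℝ) (lamd ^ 2 * (σ ^ 4)⁻¹ - γp),
        0 < Delta d (Function.update lam (d - 1) lamd) σ γp γr := by
  have hσ2 : (0:ℝ) < σ ^ 2 := by positivity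
  have hsγpos : 0 < σ ^ 2 * Real.sqrt γp := by
    have : 0 < Real.sqrt γp := Real.sqrt_pos.2 hγp
    positivity
  set sγ : ℝ := σ ^ 2 * Real.sqrt γp with hsγ
  set G : ℝ := γp + 1 with hGdef
  have hGpos : 0 < G := by positivity
  set Lmax : ℝ := σ ^ 2 * Real.sqrt G with hLmaxdef
  set C : ℝ := (∑ i ∈ range (d-1), (lam i + σ^2) * (1 + G * σ^2 / lam i))
      + (Lmax + σ^2) * (1 + G * σ^2 / sγ) with hCdef
  set TN : ℝ := σ^2 * (1 + Real.sqrt G)^2 with hTNdef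
  set U : ℝ := 1 + C + 2 * TN with hUdef
  have hTNpos : 0 < TN := by
    have : 0 ≤ Real.sqrt G := Real.sqrt_nonneg _
    positivity
  have hCnonneg : 0 ≤ C := by
    apply add_nonneg
    · apply Finset.sum_nonneg
      intro i hi
      have hli : 0 < lam i := hlam_pos i (Finset.mem_range.1 hi)
      have h2 : 0 ≤ 1 + G * σ^2 / lam i := by positivity
      positivity
    · have hL : 0 ≤ Lmax := by
        have : 0 ≤ Real.sqrt G := Real.sqrt_nonneg _
        rw [hLmaxdef]; positivity
      have h2 : 0 ≤ 1 + G * σ^2 / sγ := by positivity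
      positivity
  have hUpos : 0 < U := by rw [hUdef]; linarith
  set δ : ℝ := σ^4 / U^2 with hδdef
  have hδpos : 0 < δ := by rw [hδdef]; positivity
  set gap : ℝ := (if 2 ≤ d then ((lam (d-2) - sγ) / σ^2)^2 / 2 else 1) with hgapdef
  have hgappos : 0 < gap := by
    rw [hgapdef]
    split_ifs with h2d
    · have := hlam_last h2d
      have hpos : 0 < (lam (d-2) - sγ) / σ^2 := by
        apply div_pos; linarith; exact hσ2
      positivity
    · norm_num
  set ε : ℝ := min 1 (min (δ * γp / 2) gap) with hεdef
  have hεpos : 0 < ε := by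
    rw [hεdef]
    apply lt_min (by norm_num) (lt_min (by positivity) hgappos)
  have hε1 : ε ≤ 1 := min_le_left _ _
  have hεδ : ε ≤ δ * γp / 2 := le_trans (min_le_right _ _) (min_le_left _ _)
  have hεgap : ε ≤ gap := le_trans (min_le_right _ _) (min_le_right _ _)
  set lamd : ℝ := σ ^ 2 * Real.sqrt (γp + ε) with hlamddef
  have hlamd_gt : sγ < lamd := by
    rw [hsγ, hlamddef]
    exact mul_lt_mul_of_pos_left (Real.sqrt_lt_sqrt hγp.le (by linarith)) hσ2
  have hlamd_le : lamd ≤ Lmax := by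
    rw [hlamddef, hLmaxdef]
    exact mul_le_mul_of_nonneg_left (Real.sqrt_le_sqrt (by rw [hGdef]; linarith)) hσ2.le
  have hlamd_pos : 0 < lamd := lt_trans hsγpos hlamd_gt
  clear_value lamd ε gap δ U TN C Lmax G sγ
  refine ⟨lamd, hlamd_gt, ?_, ?_⟩
  · intro h2d
    have hgap_eq : gap = ((lam (d-2) - sγ) / σ^2)^2 / 2 := by rw [hgapdef, if_pos h2d]
    have hgapbig : 0 < lam (d-2) - sγ := by have := hlam_last h2d; linarith
    set a : ℝ := (lam (d-2) - sγ) / σ^2 with hadef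
    have hapos : 0 < a := div_pos hgapbig hσ2
    have h1 : Real.sqrt (γp + ε) ≤ Real.sqrt γp + Real.sqrt ε := by
      rw [Real.sqrt_le_iff]
      constructor
      · positivity
      · have h2 : (Real.sqrt γp + Real.sqrt ε)^2
            = γp + ε + 2 * Real.sqrt γp * Real.sqrt ε := by
          rw [add_sq, Real.sq_sqrt hγp.le, Real.sq_sqrt hεpos.le]
          ring
        have h3 : 0 ≤ 2 * Real.sqrt γp * Real.sqrt ε := by positivity
        rw [h2]; linarith
    have h2 : Real.sqrt ε < a := by
      calc Real.sqrt ε ≤ Real.sqrt gap := Real.sqrt_le_sqrt hεgap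
        _ < Real.sqrt (a^2) := by
            apply Real.sqrt_lt_sqrt (by positivity)
            rw [hgap_eq]
            have : 0 < a^2 := by positivity
            linarith
        _ = a := Real.sqrt_sq hapos.le
    have h3 : lamd ≤ sγ + σ^2 * Real.sqrt ε := by
      rw [hlamddef, hsγ]
      have := mul_le_mul_of_nonneg_left h1 hσ2.le
      linarith
    have h4 : σ^2 * Real.sqrt ε < σ^2 * a := mul_lt_mul_of_pos_left h2 hσ2
    have h5 : σ^2 * a = lam (d-2) - sγ := by
      rw [hadef]; field_simp
    linarith
  · intro γr hγr
    have hub : lamd ^ 2 * (σ ^ 4)⁻¹ - γp = ε := by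
      rw [hlamddef]
      have : (σ ^ 2 * Real.sqrt (γp + ε))^2 = σ^4 * (γp + ε) := by
        rw [mul_pow, Real.sq_sqrt (show (0:ℝ) ≤ γp + ε by linarith)]
        ring
      rw [this]
      field_simp
      ring
    rw [hub] at hγr
    obtain ⟨hγr0, hγrε⟩ := hγr
    have hgle : γp + γr ≤ G := by rw [hGdef]; linarith
    have hgpos : 0 < γp + γr := by linarith
    -- rewrite the sum
    obtain ⟨e, rfl⟩ : ∃ e, d = e + 1 := ⟨d - 1, (Nat.succ_pred_eq_of_pos hd).symm⟩
    have hde : e + 1 - 1 = e := rfl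
    rw [hde] at *
    have hsum : ∑ i ∈ range (e+1), tauSig σ γp γr ((Function.update lam e lamd) i)
        = (∑ i ∈ range e, tauSig σ γp γr (lam i)) + tauSig σ γp γr lamd := by
      rw [Finset.sum_range_succ, Function.update_self]
      congr 1
      apply Finset.sum_congr rfl
      intro i hi
      rw [Function.update_of_ne (Nat.ne_of_lt (Finset.mem_range.1 hi))]
    set S : ℝ := ∑ i ∈ range (e+1), tauSig σ γp γr ((Function.update lam e lamd) i) with hSdef
    -- bounds on S
    have hSpos : 0 < S := by
      rw [hsum]
      have h1 : 0 ≤ ∑ i ∈ range e, tauSig σ γp γr (lam i) := by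
        apply Finset.sum_nonneg
        intro i hi
        have hli : 0 < lam i := hlam_pos i (Finset.mem_range.1 hi)
        unfold tauSig
        have : 0 ≤ 1 + (γp + γr) * σ ^ 2 / lam i := by positivity
        positivity
      have h2 : 0 < tauSig σ γp γr lamd := by
        unfold tauSig
        have : 0 < 1 + (γp + γr) * σ ^ 2 / lamd := by positivity
        positivity
      linarith
    have hSle : S ≤ C := by
      rw [hsum, hCdef]
      apply add_le_add
      · apply Finset.sum_le_sum
        intro i hi
        have hli : 0 < lam i := hlam_pos i (Finset.mem_range.1 hi)
        unfold tauSig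
        apply mul_le_mul_of_nonneg_left _ (by positivity)
        have : (γp + γr) * σ ^ 2 / lam i ≤ G * σ^2 / lam i := by
          gcongr
        linarith
      · unfold tauSig
        apply mul_le_mul
        · linarith
        · have : (γp + γr) * σ ^ 2 / lamd ≤ G * σ^2 / sγ := by
            gcongr
          linarith
        · positivity
        · have : 0 ≤ Lmax := le_trans hlamd_pos.le hlamd_le
          positivity
    -- bounds on tauNoise
    set τ : ℝ := tauNoise σ γp γr with hτdef
    have hτge : σ^2 ≤ τ := by
      rw [hτdef]; unfold tauNoise
      have h1 : (1:ℝ) ≤ (1 + Real.sqrt (γp + γr))^2 := by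
        calc (1:ℝ) = 1^2 := by norm_num
          _ ≤ (1 + Real.sqrt (γp + γr))^2 := by
              apply pow_le_pow_left₀ (by norm_num)
              linarith [Real.sqrt_nonneg (γp + γr)]
      calc σ^2 = σ^2 * 1 := (mul_one _).symm
        _ ≤ σ ^ 2 * (1 + Real.sqrt (γp + γr)) ^ 2 := by
            exact mul_le_mul_of_nonneg_left h1 hσ2.le
    have hτle : τ ≤ TN := by
      rw [hτdef, hTNdef]; unfold tauNoise
      have h1 : Real.sqrt (γp + γr) ≤ Real.sqrt G := Real.sqrt_le_sqrt hgle
      have h2 := Real.sqrt_nonneg (γp + γr)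
      apply mul_le_mul_of_nonneg_left _ hσ2.le
      apply pow_le_pow_left₀ (by linarith) (by linarith)
    have hτpos : 0 < τ := lt_of_lt_of_le hσ2 hτge
    -- denominators
    have hD1pos : 0 < 1 + (S + τ) := by linarith
    have hD2pos : 0 < 1 + (S + τ) + τ := by linarith
    have hD1le : 1 + (S + τ) ≤ U := by rw [hUdef]; linarith
    have hD2le : 1 + (S + τ) + τ ≤ U := by rw [hUdef]; linarith
    have hDDle : (1 + (S + τ)) * (1 + (S + τ) + τ) ≤ U^2 := by
      rw [sq]
      exact mul_le_mul hD1le hD2le hD2pos.le hUpos.le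
    have hkey : δ ≤ τ^2 / ((1 + (S + τ)) * (1 + (S + τ) + τ)) := by
      rw [hδdef]
      apply div_le_div₀ (by positivity) _ (by positivity) hDDle
      calc σ^4 = (σ^2)^2 := by ring
        _ ≤ τ^2 := pow_le_pow_left₀ hσ2.le hτge 2
    have hfirst : γr / (γr + γp) < δ := by
      have h1 : γr / (γr + γp) ≤ γr / γp := by gcongr; linarith
      have h2 : γr / γp < ε / γp := by gcongr
      have h3 : ε / γp ≤ δ / 2 := by
        rw [div_le_div_iff₀ hγp (by norm_num)]
        linarith
      linarith
    unfold Delta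
    rw [← hSdef, ← hτdef]
    have : -γr / (γr + γp) = -(γr / (γr + γp)) := by ring
    rw [this]
    linarith
end

section
/- For every σ > 0, every integer d ≥ 1, and all constants λ_1 > ⋯ > λ_d > 0, there exists γ_p ∈ (0, λ_d²σ⁻⁴) large enough such that Δ(γ_p, γ_r) > 0 (i.e., φ(d) > φ(d+1)) for every γ_r ∈ (0, λ_d²σ⁻⁴ − γ_p). -/
open Finset

set_option maxHeartbeats 1000000 in
/-- Theorem 3 (iii).  For every `σ > 0`, `d ≥ 1` and constants
`λ_1 > ⋯ > λ_d > 0` (here `lam k` is `λ_{k+1}`), there exists `γ_p ∈ (0, λ_d²σ⁻⁴)` (large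
enough) such that `Δ(γ_p, γ_r) > 0` for every `γ_r ∈ (0, λ_d²σ⁻⁴ − γ_p)`. -/
theorem predictor_augmentation_inconsistent_large_gamma_p
    (σ : ℝ) (hσ : 0 < σ) (d : ℕ) (hd : 1 ≤ d)
    (lam : ℕ → ℝ)
    (hlam_pos : ∀ k, k < d → 0 < lam k)
    (hlam_dec : ∀ k k', k < k' → k' < d → lam k' < lam k) :
    ∃ γp ∈ Set.Ioo (0 : ℝ) ((lam (d - 1)) ^ 2 * (σ ^ 4)⁻¹),
      ∀ γr ∈ Set.Ioo (0 : ℝ) ((lam (d - 1)) ^ 2 * (σ ^ 4)⁻¹ - γp),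
        0 < Delta d lam σ γp γr := by
  have hld : 0 < lam (d - 1) := hlam_pos _ (by omega)
  have hσ2 : (0 : ℝ) < σ ^ 2 := by positivity
  set B : ℝ := (lam (d - 1)) ^ 2 * (σ ^ 4)⁻¹ with hBdef
  have hB : 0 < B := by positivity
  set T : ℝ := σ ^ 2 * (1 + Real.sqrt B) ^ 2 with hTdef
  have hsB : 0 ≤ Real.sqrt B := Real.sqrt_nonneg _
  have hT : 0 < T := by positivity
  set C : ℝ := ∑ i ∈ Finset.range d, (lam i + σ ^ 2) * (1 + B * σ ^ 2 / lam i) with hCdef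
  have hC : 0 ≤ C := by
    apply Finset.sum_nonneg
    intro i hi
    have hli := hlam_pos i (Finset.mem_range.mp hi)
    positivity
  set D : ℝ := (1 + (C + T)) * (1 + (C + T) + T) with hDdef
  have hD : (0 : ℝ) < D := by positivity
  set m : ℝ := σ ^ 4 / D with hmdef
  have hm : 0 < m := by positivity
  have h1m : (0 : ℝ) < 1 + m := by linarith
  have hlt : B / (1 + m) < B := by
    rw [div_lt_iff₀ h1m]; nlinarith
  have hq : 0 < B / (1 + m) := by positivity
  refine ⟨(B / (1 + m) + B) / 2, ⟨by positivity, by linarith⟩, ?_⟩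
  intro γr hγr
  obtain ⟨hγr0, hγrB⟩ := hγr
  set γp : ℝ := (B / (1 + m) + B) / 2 with hγpdef
  have hγp0 : 0 < γp := by positivity
  have hγple : B / (1 + m) < γp := by rw [hγpdef]; linarith
  have hγ : γp + γr ≤ B := by linarith
  have hγpos : 0 < γp + γr := by linarith
  have hsγ : 0 ≤ Real.sqrt (γp + γr) := Real.sqrt_nonneg _
  have hτn_lb : σ ^ 2 ≤ tauNoise σ γp γr := by
    unfold tauNoise
    nlinarith [mul_nonneg hσ2.le hsγ, mul_nonneg hσ2.le (sq_nonneg (Real.sqrt (γp + γr)))]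
  have hτn_ub : tauNoise σ γp γr ≤ T := by
    unfold tauNoise
    have h1 : Real.sqrt (γp + γr) ≤ Real.sqrt B := Real.sqrt_le_sqrt hγ
    rw [hTdef]
    nlinarith [mul_nonneg (mul_nonneg hσ2.le (sub_nonneg.mpr h1)) (by linarith : (0:ℝ) ≤ 2 + Real.sqrt B + Real.sqrt (γp + γr))]
  have hS_ub : (∑ i ∈ Finset.range d, tauSig σ γp γr (lam i)) ≤ C := by
    rw [hCdef]
    apply Finset.sum_le_sum
    intro i hi
    have hli := hlam_pos i (Finset.mem_range.mp hi)
    unfold tauSig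
    have h1 : (γp + γr) * σ ^ 2 / lam i ≤ B * σ ^ 2 / lam i := by
      gcongr
    have h2 : (0 : ℝ) < lam i + σ ^ 2 := by linarith
    exact mul_le_mul_of_nonneg_left (by linarith) h2.le
  have hS_nn : 0 ≤ ∑ i ∈ Finset.range d, tauSig σ γp γr (lam i) := by
    apply Finset.sum_nonneg
    intro i hi
    have hli := hlam_pos i (Finset.mem_range.mp hi)
    unfold tauSig
    have h1 : 0 ≤ (γp + γr) * σ ^ 2 / lam i :=
      le_of_lt (div_pos (mul_pos hγpos hσ2) hli)
    exact mul_nonneg (by linarith) (by linarith)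
  unfold Delta
  set S : ℝ := ∑ i ∈ Finset.range d, tauSig σ γp γr (lam i) with hSdef
  set τ : ℝ := tauNoise σ γp γr with hτdef
  have hτ0 : 0 < τ := lt_of_lt_of_le hσ2 hτn_lb
  have hden_pos : 0 < (1 + (S + τ)) * (1 + (S + τ) + τ) := mul_pos (by linarith) (by linarith)
  have hden_le : (1 + (S + τ)) * (1 + (S + τ) + τ) ≤ D := by
    rw [hDdef]
    apply mul_le_mul (by linarith) (by linarith) (by linarith) (by linarith)
  have hfrac : m ≤ τ ^ 2 / ((1 + (S + τ)) * (1 + (S + τ) + τ)) := by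
    rw [hmdef, show (σ:ℝ) ^ 4 = (σ ^ 2) ^ 2 by ring]
    apply div_le_div₀ (by positivity) (pow_le_pow_left₀ hσ2.le hτn_lb 2) hden_pos hden_le
  have hfirst : γr / (γr + γp) < m := by
    have h1 : γr / (γr + γp) ≤ γr / γp := by
      apply div_le_div_of_nonneg_left (le_of_lt hγr0) hγp0 (by linarith)
    have h2 : γr / γp < m := by
      rw [div_lt_iff₀ hγp0]
      have h3 : B < γp * (1 + m) := (div_lt_iff₀ h1m).mp hγple
      have h4 : γp * (1 + m) = γp + m * γp := by ring
      linarith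
    linarith
  have : -γr / (γr + γp) = -(γr / (γr + γp)) := by ring
  rw [this]
  linarith
end

section
/- Let σ > 0, γ > 0 and λ > σ²√γ. Then the debiasing function f satisfies f((λ + σ²)(1 + γσ²/λ)) = λ; that is, f exactly recovers the spike parameter λ from the limiting value (λ + σ²)(1 + γσ²/λ) of the corresponding sample covariance eigenvalue. -/
/-- The debiasing function `f(τ) = ½{τ − σ²(1+γ)} + ½ max{0, (τ − σ²(1+γ))² − 4σ⁴γ}^{1/2}`. -/
noncomputable def debias (σ γ τ : ℝ) : ℝ :=
  (τ - σ ^ 2 * (1 + γ)) / 2 + Real.sqrt (max 0 ((τ - σ ^ 2 * (1 + γ)) ^ 2 - 4 * σ ^ 4 * γ)) / 2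

/-- For `σ > 0`, `γ > 0` and `λ > σ²√γ`, the debiasing function exactly
recovers the spike: `f((λ + σ²)(1 + γσ²/λ)) = λ`. -/
theorem debias_recovers_spike (σ γ lam : ℝ) (hσ : 0 < σ) (hγ : 0 < γ)
    (hlam : σ ^ 2 * Real.sqrt γ < lam) :
    debias σ γ ((lam + σ ^ 2) * (1 + γ * σ ^ 2 / lam)) = lam := by
  have hl : 0 < lam := lt_trans (by positivity) hlam
  have hsq : σ ^ 4 * γ < lam ^ 2 := by
    have := mul_self_lt_mul_self (by positivity) hlam
    calc σ ^ 4 * γ = (σ ^ 2 * Real.sqrt γ) * (σ ^ 2 * Real.sqrt γ) := by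
          rw [mul_mul_mul_comm]
          rw [Real.mul_self_sqrt hγ.le]; ring
      _ < lam * lam := this
      _ = lam ^ 2 := (sq lam).symm
  have hdiff : 0 ≤ lam - γ * σ ^ 4 / lam := by
    rw [sub_nonneg, div_le_iff₀ hl]
    nlinarith
  have ht : (lam + σ ^ 2) * (1 + γ * σ ^ 2 / lam) - σ ^ 2 * (1 + γ)
      = lam + γ * σ ^ 4 / lam := by field_simp; ring
  have hmax : max 0 (((lam + σ ^ 2) * (1 + γ * σ ^ 2 / lam) - σ ^ 2 * (1 + γ)) ^ 2
      - 4 * σ ^ 4 * γ) = (lam - γ * σ ^ 4 / lam) ^ 2 := by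
    rw [ht, max_eq_right]
    · field_simp; ring
    · have : (lam + γ * σ ^ 4 / lam) ^ 2 - 4 * σ ^ 4 * γ = (lam - γ * σ ^ 4 / lam) ^ 2 := by
        field_simp; ring
      rw [this]; positivity
  unfold debias
  rw [hmax, Real.sqrt_sq hdiff, ht]
  ring
end

section
/- Let d = 1 and σ² = 1, let γ_p > 0, γ_r > 0 and λ_1 ≥ √(γ_p + γ_r), and set τ_1 := (λ_1 + 1)(λ_1 + γ_p + γ_r)/λ_1 and τ_2 := (1 + √(γ_p + γ_r))². If γ_r (λ_1 + 3(λ_1 + 1)(λ_1 + γ_p + γ_r))² < λ_1²(γ_r + γ_p), then φ(1) − φ(2) := −γ_r/(γ_r + γ_p) + τ_2² / [(1 + τ_1 + τ_2)(1 + τ_1 + 2τ_2)] > 0. (This is the explicit sufficient condition for inconsistency of predictor augmentation used in the proof of Theorem 3, relying on τ_1 ≥ τ_2 ≥ 1.) -/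
/-- Explicit sufficient condition for inconsistency of predictor
augmentation in the case `d = 1`, `σ² = 1`: with `τ_1 = (λ_1 + 1)(λ_1 + γ_p + γ_r)/λ_1` and
`τ_2 = (1 + √(γ_p + γ_r))²`, if `γ_r (λ_1 + 3(λ_1 + 1)(λ_1 + γ_p + γ_r))² < λ_1²(γ_r + γ_p)`,
then `φ(1) − φ(2) = −γ_r/(γ_r + γ_p) + τ_2²/[(1 + τ_1 + τ_2)(1 + τ_1 + 2τ_2)] > 0`. -/
theorem inconsistency_sufficient_condition_d1
    (γp γr lam1 : ℝ) (hγp : 0 < γp) (hγr : 0 < γr)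
    (hlam : Real.sqrt (γp + γr) ≤ lam1)
    (hcond : γr * (lam1 + 3 * (lam1 + 1) * (lam1 + γp + γr)) ^ 2 < lam1 ^ 2 * (γr + γp)) :
    0 < -γr / (γr + γp) +
      ((1 + Real.sqrt (γp + γr)) ^ 2) ^ 2 /
        ((1 + (lam1 + 1) * (lam1 + γp + γr) / lam1 + (1 + Real.sqrt (γp + γr)) ^ 2) *
         (1 + (lam1 + 1) * (lam1 + γp + γr) / lam1 + 2 * (1 + Real.sqrt (γp + γr)) ^ 2)) := by
  set s : ℝ := Real.sqrt (γp + γr) with hs_def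
  have hg : 0 < γp + γr := by linarith
  have hs : 0 < s := Real.sqrt_pos.mpr hg
  have hs2 : s ^ 2 = γp + γr := Real.sq_sqrt hg.le
  have hl : 0 < lam1 := lt_of_lt_of_le hs hlam
  set t1 : ℝ := (lam1 + 1) * (lam1 + γp + γr) / lam1 with ht1_def
  set t2 : ℝ := (1 + s) ^ 2 with ht2_def
  have ht1l : t1 * lam1 = (lam1 + 1) * (lam1 + γp + γr) := by
    rw [ht1_def, div_mul_cancel₀]; exact hl.ne'
  have ht1 : 1 ≤ t1 := by
    rw [ht1_def, le_div_iff₀ hl]; nlinarith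
  have ht2 : 1 ≤ t2 := by rw [ht2_def]; nlinarith [hs, sq_nonneg s]
  -- from hcond : γr * (1 + 3 t1)^2 < γr + γp
  have hkey2 : γr * (1 + 3 * t1) ^ 2 < γr + γp := by
    have h := hcond
    have hexp : lam1 + 3 * (lam1 + 1) * (lam1 + γp + γr) = lam1 * (1 + 3 * t1) := by
      nlinarith [ht1l]
    rw [hexp] at h
    have hl2 : 0 < lam1 ^ 2 := by positivity
    nlinarith [h]
  have hkey : γr * ((1 + t1 + t2) * (1 + t1 + 2 * t2)) < (γr + γp) * t2 ^ 2 := by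
    have h1 : (1 + t1 + t2) * (1 + t1 + 2 * t2) ≤ (1 + 3 * t1) ^ 2 * t2 ^ 2 := by
      have ha : (0:ℝ) ≤ t1 - 1 := by linarith
      have hb : (0:ℝ) ≤ t2 - 1 := by linarith
      nlinarith [mul_nonneg ha hb, mul_nonneg (mul_nonneg ha ha) hb,
        mul_nonneg (mul_nonneg ha hb) hb, mul_nonneg (mul_nonneg (mul_nonneg ha ha) hb) hb,
        mul_nonneg ha ha, mul_nonneg hb hb]
    have h2 : γr * ((1 + t1 + t2) * (1 + t1 + 2 * t2)) ≤ γr * ((1 + 3 * t1) ^ 2 * t2 ^ 2) :=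
      mul_le_mul_of_nonneg_left h1 hγr.le
    have h3 : γr * ((1 + 3 * t1) ^ 2 * t2 ^ 2) < (γr + γp) * t2 ^ 2 := by
      have ht2pos : (0:ℝ) < t2 ^ 2 := by positivity
      calc γr * ((1 + 3 * t1) ^ 2 * t2 ^ 2) = γr * (1 + 3 * t1) ^ 2 * t2 ^ 2 := by ring
        _ < (γr + γp) * t2 ^ 2 := mul_lt_mul_of_pos_right hkey2 ht2pos
    linarith
  have hD : 0 < (1 + t1 + t2) * (1 + t1 + 2 * t2) := mul_pos (by linarith) (by linarith)
  have hgg : 0 < γr + γp := by linarith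
  rw [neg_div, neg_add_eq_sub, sub_pos, div_lt_div_iff₀ hgg hD]
  linarith [hkey]
end
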